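/- arXiv:2212.13815 — 2 statements merged into one kernel-verified Lean document; each statement's English description precedes it below -/
import Mathlib

section
/- Arbitrage Lemma: Let Ĥ be a set of quantum states. The market model admits a quantum arbitrage opportunity relative to Ĥ if and only if there is a vector ξ ∈ ℝ^d such that (1) for all ψ ∈ Ĥ with ⟨ψ|ρ|ψ⟩ > 0 one has ⟨ψ|Σ_{i=1}^d ξ_i S_i|ψ⟩ ≥ (1+r)·Σ_{i=1}^d ξ_i π_i, and (2) there exists at least one ψ ∈ Ĥ with ⟨ψ|ρ|ψ⟩ > 0 such that ⟨ψ|Σ_{i=1}^d ξ_i S_i|ψ⟩ > (1+r)·Σ_{i=1}^d ξ_i π_i. -/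
open Matrix
open scoped ComplexOrder

/-- Quadratic form ⟨ψ|M|ψ⟩ (real part of ψ*Mψ; a real number when M is Hermitian). -/
noncomputable def qf {K : ℕ} (M : Matrix (Fin K) (Fin K) ℂ) (ψ : Fin K → ℂ) : ℝ :=
  (star ψ ⬝ᵥ (M *ᵥ ψ)).re

/-- A density operator: positive semidefinite (hence Hermitian) with trace 1. -/
def IsDensityOp {K : ℕ} (ρ : Matrix (Fin K) (Fin K) ℂ) : Prop :=
  ρ.PosSemidef ∧ ρ.trace = 1

/-- A quantum state: a unit vector of ℂ^K. -/
def IsState {K : ℕ} (ψ : Fin K → ℂ) : Prop := star ψ ⬝ᵥ ψ = 1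

/-- σ ≪ ρ : every null vector of ρ is a null vector of σ. -/
def AbsCont {K : ℕ} (σ ρ : Matrix (Fin K) (Fin K) ℂ) : Prop :=
  ∀ ψ : Fin K → ℂ, ρ *ᵥ ψ = 0 → σ *ᵥ ψ = 0

/-- ρ ≈ σ : mutual absolute continuity. -/
def EquivDO {K : ℕ} (ρ σ : Matrix (Fin K) (Fin K) ℂ) : Prop := AbsCont σ ρ ∧ AbsCont ρ σ

/-- A single-period market model with one risk-free asset (index 0) and d risky quantum
assets on the Hilbert space ℂ^K. -/
structure MarketModel (K d : ℕ) where
  /-- interest rate -/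
  r : ℝ
  hr : -1 < r
  /-- today's prices π_0, …, π_d -/
  pi : Fin (d + 1) → ℝ
  hpi0 : pi 0 = 1
  hpi : ∀ i, 0 < pi i
  /-- the quantum assets S_0, …, S_d -/
  S : Fin (d + 1) → Matrix (Fin K) (Fin K) ℂ
  hS : ∀ i, (S i).PosSemidef
  hS0 : S 0 = ((1 + r : ℝ) : ℂ) • (1 : Matrix (Fin K) (Fin K) ℂ)
  /-- the market density operator -/
  ρ : Matrix (Fin K) (Fin K) ℂ
  hρ : IsDensityOp ρ

/-- Combined payoff matrix xb·S̄ of a portfolio. -/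
noncomputable def payoff {K d : ℕ} (M : MarketModel K d) (ξ : Fin (d + 1) → ℝ) :
    Matrix (Fin K) (Fin K) ℂ :=
  ∑ i, (ξ i : ℂ) • M.S i

/-- Price xb·π̄ of a portfolio. -/
noncomputable def priceOf {K d : ℕ} (M : MarketModel K d) (ξ : Fin (d + 1) → ℝ) : ℝ :=
  ∑ i, ξ i * M.pi i

/-- A quantum arbitrage opportunity relative to a set H of allowable states. -/
def IsArbitrage {K d : ℕ} (M : MarketModel K d) (H : Set (Fin K → ℂ))
    (ξ : Fin (d + 1) → ℝ) : Prop :=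
  priceOf M ξ ≤ 0 ∧
  (∀ ψ ∈ H, 0 < qf M.ρ ψ → 0 ≤ qf (payoff M ξ) ψ) ∧
  (∃ ψ ∈ H, 0 < qf M.ρ ψ ∧ 0 < qf (payoff M ξ) ψ)

/-- The market model is quantum arbitrage-free relative to H. -/
def ArbitrageFree {K d : ℕ} (M : MarketModel K d) (H : Set (Fin K → ℂ)) : Prop :=
  ∀ ξ : Fin (d + 1) → ℝ, ¬ IsArbitrage M H ξ

/-- A risk-neutral (martingale) density operator: π_i = tr(ρ* S_i)/(1+r) for all i. -/
def IsRiskNeutral {K d : ℕ} (M : MarketModel K d) (ρstar : Matrix (Fin K) (Fin K) ℂ) : Prop :=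
  IsDensityOp ρstar ∧
    ∀ i : Fin (d + 1), (M.pi i : ℂ) = (ρstar * M.S i).trace / ((1 + M.r : ℝ) : ℂ)

lemma qf_add' {K : ℕ} (A B : Matrix (Fin K) (Fin K) ℂ) (ψ : Fin K → ℂ) :
    qf (A + B) ψ = qf A ψ + qf B ψ := by
  simp [qf, Matrix.add_mulVec, dotProduct_add]

lemma key_qf {K d : ℕ} (M : MarketModel K d) (ξ : Fin (d + 1) → ℝ) (ψ : Fin K → ℂ)
    (hψ : IsState ψ) :
    qf (payoff M ξ) ψ =
      ξ 0 * (1 + M.r) + qf (∑ i : Fin d, ((ξ i.succ : ℝ) : ℂ) • M.S i.succ) ψ := by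
  rw [payoff, Fin.sum_univ_succ, qf_add', M.hS0]
  congr 1
  have hψ' : star ψ ⬝ᵥ ψ = 1 := hψ
  simp [qf, Matrix.smul_mulVec, Matrix.one_mulVec, dotProduct_smul, hψ',
    Complex.mul_re]
  ring

lemma key_price {K d : ℕ} (M : MarketModel K d) (ξ : Fin (d + 1) → ℝ) :
    priceOf M ξ = ξ 0 + ∑ i : Fin d, ξ i.succ * M.pi i.succ := by
  rw [priceOf, Fin.sum_univ_succ, M.hpi0, mul_one]

/-- **Arbitrage Lemma.** The market model admits a quantum arbitrage opportunity relative
to a set Ĥ of quantum states iff there is ξ ∈ ℝ^d on the risky assets such that (1) the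
risky payoff is ≥ (1+r)·ξ·π on all allowable states not null for ρ, and (2) strictly
greater on at least one such state. -/
theorem arbitrage_lemma
    (K d : ℕ) (hK : 1 ≤ K) (hd : 1 ≤ d) (M : MarketModel K d)
    (H : Set (Fin K → ℂ)) (hH : ∀ ψ ∈ H, IsState ψ) :
    (∃ ξ : Fin (d + 1) → ℝ, IsArbitrage M H ξ) ↔
      ∃ ξ : Fin d → ℝ,
        (∀ ψ ∈ H, 0 < qf M.ρ ψ →
          (1 + M.r) * (∑ i : Fin d, ξ i * M.pi i.succ) ≤
            qf (∑ i : Fin d, (ξ i : ℂ) • M.S i.succ) ψ) ∧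
        (∃ ψ ∈ H, 0 < qf M.ρ ψ ∧
          (1 + M.r) * (∑ i : Fin d, ξ i * M.pi i.succ) <
            qf (∑ i : Fin d, (ξ i : ℂ) • M.S i.succ) ψ) := by
  have hr1 : (0 : ℝ) < 1 + M.r := by linarith [M.hr]
  constructor
  · rintro ⟨xb, hprice, hge, ψ0, hψ0H, hρ0, hpos⟩
    refine ⟨fun i => xb i.succ, ?_, ψ0, hψ0H, hρ0, ?_⟩
    · intro ψ hψH hρψ
      have h1 := hge ψ hψH hρψ
      rw [key_qf M xb ψ (hH ψ hψH)] at h1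
      rw [key_price] at hprice
      nlinarith
    · have h1 := hpos
      rw [key_qf M xb ψ0 (hH ψ0 hψ0H)] at h1
      rw [key_price] at hprice
      nlinarith
  · rintro ⟨ξ, h1, ψ0, hψ0H, hρ0, hpos⟩
    set c : ℝ := ∑ i : Fin d, ξ i * M.pi i.succ with hc
    refine ⟨Fin.cons (-c) ξ, ?_, ?_, ψ0, hψ0H, hρ0, ?_⟩
    · rw [key_price]
      simp [hc]
    · intro ψ hψH hρψ
      have h2 := h1 ψ hψH hρψ
      rw [key_qf M _ ψ (hH ψ hψH)]
      simp only [Fin.cons_succ, Fin.cons_zero]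
      nlinarith
    · rw [key_qf M _ ψ0 (hH ψ0 hψ0H)]
      simp only [Fin.cons_succ, Fin.cons_zero]
      nlinarith
end

section
/- Chain rule for the density-operator Radon–Nikodym derivative: let ρ, σ, τ be positive semidefinite Hermitian K×K complex matrices with ρ ≪ σ and σ ≪ τ. Then for every K×K complex matrix X, φ(ρ,τ)[X] = φ(ρ,σ)[φ(σ,τ)[X]]. -/
open Matrix
open scoped ComplexOrder

/-- ρ^{-1/2}: the Moore–Penrose pseudoinverse of the positive semidefinite square root
ρ^{1/2} of a positive semidefinite Hermitian matrix ρ, via the spectral decomposition. -/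
noncomputable def invSqrt {K : ℕ} (ρ : Matrix (Fin K) (Fin K) ℂ) (hρ : ρ.IsHermitian) :
    Matrix (Fin K) (Fin K) ℂ :=
  (hρ.eigenvectorUnitary : Matrix (Fin K) (Fin K) ℂ) *
    Matrix.diagonal (fun i => ((Real.sqrt (hρ.eigenvalues i))⁻¹ : ℂ)) *
    star (hρ.eigenvectorUnitary : Matrix (Fin K) (Fin K) ℂ)

/-- The old Mathlib `Matrix.PosSemidef.sqrt`, restated with its original definition. -/
noncomputable def psdSqrt {K : ℕ} (A : Matrix (Fin K) (Fin K) ℂ) (hA : A.PosSemidef) :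
    Matrix (Fin K) (Fin K) ℂ :=
  (hA.1.eigenvectorUnitary : Matrix (Fin K) (Fin K) ℂ) *
    Matrix.diagonal ((↑) ∘ (fun x : ℝ => Real.sqrt x) ∘ hA.1.eigenvalues) *
    (star hA.1.eigenvectorUnitary : Matrix (Fin K) (Fin K) ℂ)

/-- The density-operator Radon–Nikodym derivative φ(σ,ρ)[X] = σ^{1/2} ρ^{-1/2} X ρ^{-1/2} σ^{1/2}. -/
noncomputable def rnDeriv {K : ℕ} (σ ρ : Matrix (Fin K) (Fin K) ℂ)
    (hσ : σ.PosSemidef) (hρ : ρ.PosSemidef) (X : Matrix (Fin K) (Fin K) ℂ) :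
    Matrix (Fin K) (Fin K) ℂ :=
  psdSqrt σ hσ * invSqrt ρ hρ.1 * X * invSqrt ρ hρ.1 * psdSqrt σ hσ

/-!
Let `P` be the support projection of `σ`. By the functional calculus,
`σ^{-1/2} σ^{1/2} = σ^{1/2} σ^{-1/2} = P`. If `ρ ≪ σ`, the columns of `P - 1` lie in
`ker σ ⊆ ker ρ = ker ρ^{1/2}`, so `ρ^{1/2} P = ρ^{1/2} = P ρ^{1/2}`. Inserting `P` on both sides of
`φ(ρ,τ)[X] = ρ^{1/2} τ^{-1/2} X τ^{-1/2} ρ^{1/2}` and regrouping gives `φ(ρ,σ)[φ(σ,τ)[X]]`.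
-/

namespace Matrix

section SupportProj

variable {n 𝕜 : Type*} [Fintype n] [DecidableEq n] [RCLike 𝕜]

lemma PosSemidef.spectrum_nonneg {A : Matrix n n 𝕜} (hA : A.PosSemidef) :
    ∀ x ∈ spectrum ℝ A, 0 ≤ x := by
  rw [hA.1.spectrum_real_eq_range_eigenvalues]
  rintro _ ⟨i, rfl⟩
  exact hA.eigenvalues_nonneg i

noncomputable def supportProj (A : Matrix n n 𝕜) : Matrix n n 𝕜 :=
  cfc (fun x : ℝ => if x = 0 then 0 else 1) A

lemma supportProj_isHermitian (A : Matrix n n 𝕜) : (supportProj A).IsHermitian :=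
  cfc_predicate _ _

lemma IsHermitian.mul_supportProj {A : Matrix n n 𝕜} (hA : A.IsHermitian) :
    A * supportProj A = A := by
  nth_rw 1 [← cfc_id ℝ A hA.isSelfAdjoint]
  rw [supportProj, ← cfc_mul _ _ A (A.finite_real_spectrum.continuousOn _)
    (A.finite_real_spectrum.continuousOn _)]
  nth_rw 2 [← cfc_id ℝ A hA.isSelfAdjoint]
  exact cfc_congr fun x _ => by split_ifs with hx <;> simp [hx]

end SupportProj

variable {K : ℕ}

lemma invSqrt_eq_cfc (A : Matrix (Fin K) (Fin K) ℂ) (hA : A.IsHermitian) :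
    invSqrt A hA = cfc (fun x => (√x)⁻¹) A := by
  rw [hA.cfc_eq, IsHermitian.cfc, Unitary.conjStarAlgAut_apply, invSqrt]
  congr
  ext i
  simp

lemma psdSqrt_eq_cfc (A : Matrix (Fin K) (Fin K) ℂ) (hA : A.PosSemidef) :
    psdSqrt A hA = cfc Real.sqrt A := by
  rw [hA.1.cfc_eq, IsHermitian.cfc, Unitary.conjStarAlgAut_apply]
  rfl

lemma psdSqrt_isHermitian (A : Matrix (Fin K) (Fin K) ℂ) (hA : A.PosSemidef) :
    (psdSqrt A hA).IsHermitian := by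
  rw [psdSqrt_eq_cfc]
  exact cfc_predicate _ _

lemma psdSqrt_mul_self (A : Matrix (Fin K) (Fin K) ℂ) (hA : A.PosSemidef) :
    psdSqrt A hA * psdSqrt A hA = A := by
  rw [psdSqrt_eq_cfc, ← cfc_mul _ _ A]
  conv_rhs => rw [← cfc_id ℝ A hA.1.isSelfAdjoint]
  exact cfc_congr fun x hx => Real.mul_self_sqrt (hA.spectrum_nonneg x hx)

lemma psdSqrt_mul_eq_zero {A M : Matrix (Fin K) (Fin K) ℂ} (hA : A.PosSemidef) (h : A * M = 0) :
    psdSqrt A hA * M = 0 := by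
  rw [← conjTranspose_mul_self_eq_zero, conjTranspose_mul, (psdSqrt_isHermitian A hA).eq,
    mul_assoc, ← mul_assoc (psdSqrt A hA), psdSqrt_mul_self, h, mul_zero]

lemma invSqrt_mul_psdSqrt (A : Matrix (Fin K) (Fin K) ℂ) (hA : A.PosSemidef) :
    invSqrt A hA.1 * psdSqrt A hA = supportProj A := by
  rw [invSqrt_eq_cfc, psdSqrt_eq_cfc, supportProj,
    ← cfc_mul _ _ A (A.finite_real_spectrum.continuousOn _)]
  refine cfc_congr fun x hx => ?_
  obtain rfl | hx₀ := eq_or_ne x 0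
  · simp
  · have hsqrt : √x ≠ 0 := (Real.sqrt_ne_zero (hA.spectrum_nonneg x hx)).mpr hx₀
    simp [hx₀, hsqrt]

lemma psdSqrt_mul_invSqrt (A : Matrix (Fin K) (Fin K) ℂ) (hA : A.PosSemidef) :
    psdSqrt A hA * invSqrt A hA.1 = supportProj A := by
  rw [← invSqrt_mul_psdSqrt A hA, invSqrt_eq_cfc, psdSqrt_eq_cfc]
  exact cfc_commute_cfc _ _ A

lemma AbsCont.mul_eq_zero {A B M : Matrix (Fin K) (Fin K) ℂ} (hAB : AbsCont A B)
    (h : B * M = 0) : A * M = 0 := by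
  ext i j
  exact congrFun (hAB (fun k => M k j) (funext fun i => congrFun (congrFun h i) j)) i

lemma AbsCont.psdSqrt_mul_supportProj {A B : Matrix (Fin K) (Fin K) ℂ} (hAB : AbsCont A B)
    (hA : A.PosSemidef) (hB : B.IsHermitian) : psdSqrt A hA * supportProj B = psdSqrt A hA := by
  have hker : B * (supportProj B - 1) = 0 := by rw [mul_sub, hB.mul_supportProj, mul_one, sub_self]
  simpa only [mul_sub, mul_one, sub_eq_zero] using psdSqrt_mul_eq_zero hA (hAB.mul_eq_zero hker)

lemma AbsCont.supportProj_mul_psdSqrt {A B : Matrix (Fin K) (Fin K) ℂ} (hAB : AbsCont A B)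
    (hA : A.PosSemidef) (hB : B.IsHermitian) : supportProj B * psdSqrt A hA = psdSqrt A hA := by
  simpa only [conjTranspose_mul, (psdSqrt_isHermitian A hA).eq, (supportProj_isHermitian B).eq]
    using congrArg conjTranspose (hAB.psdSqrt_mul_supportProj hA hB)

end Matrix

theorem rnDeriv_chain_general
    (K : ℕ) (ρ σ τ : Matrix (Fin K) (Fin K) ℂ)
    (hρ : ρ.PosSemidef) (hσ : σ.PosSemidef) (hτ : τ.PosSemidef)
    (hac₁ : AbsCont ρ σ) :
    ∀ X : Matrix (Fin K) (Fin K) ℂ,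
      rnDeriv ρ τ hρ hτ X = rnDeriv ρ σ hρ hσ (rnDeriv σ τ hσ hτ X) := by
  intro X
  calc rnDeriv ρ τ hρ hτ X
      = (psdSqrt ρ hρ * (invSqrt σ hσ.1 * psdSqrt σ hσ)) * invSqrt τ hτ.1 * X * invSqrt τ hτ.1 *
          ((psdSqrt σ hσ * invSqrt σ hσ.1) * psdSqrt ρ hρ) := by
        rw [invSqrt_mul_psdSqrt, psdSqrt_mul_invSqrt, hac₁.psdSqrt_mul_supportProj hρ hσ.1,
          hac₁.supportProj_mul_psdSqrt hρ hσ.1, rnDeriv]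
    _ = rnDeriv ρ σ hρ hσ (rnDeriv σ τ hσ hτ X) := by simp only [rnDeriv, mul_assoc]

/-- Chain rule for the density-operator Radon–Nikodym derivative:
if ρ ≪ σ and σ ≪ τ then φ(ρ,τ)[X] = φ(ρ,σ)[φ(σ,τ)[X]] for every matrix X. -/
theorem rnDeriv_chain
    (K : ℕ) (hK : 1 ≤ K) (ρ σ τ : Matrix (Fin K) (Fin K) ℂ)
    (hρ : ρ.PosSemidef) (hσ : σ.PosSemidef) (hτ : τ.PosSemidef)
    (hac₁ : AbsCont ρ σ) (hac₂ : AbsCont σ τ) :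
    ∀ X : Matrix (Fin K) (Fin K) ℂ,
      rnDeriv ρ τ hρ hτ X = rnDeriv ρ σ hρ hσ (rnDeriv σ τ hσ hτ X) :=
  rnDeriv_chain_general K ρ σ τ hρ hσ hτ hac₁
end
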